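/- arXiv:2409.10035 — 4 statements merged into one kernel-verified Lean document; each statement's English description precedes it below -/
import Mathlib

section
/- Let g : ℝ → ℝ be C¹ with g(0) = 0, and suppose g'(s) ≥ −κ₁ + κ₂|s|^{q-1} for all s, where κ₁, κ₂ > 0 and q ≥ 3. Let G(s) = ∫₀ˢ g(τ) dτ. Then there exists δ_q > 0 depending only on q and κ₂ such that for all v, z ∈ ℝ: G(v+z) − G(v) − g(v)z ≥ −κ₁|z|² + δ_q |z|² (|v|^{q-1} + |z|^{q-1}). -/
/-!
Put `h s = g s + κ₁ * s`, so that `h' ≥ κ₂ |s|^(q-1) ≥ 0`. For `z ≥ 0`,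
`G (v + z) - G v - g v * z = ∫₀ᶻ (h (v + t) - h v) dt - κ₁ z² / 2`, and the integrand is monotone
and vanishes at `0`, so the integral is at least `(z/2) (h (v + z/2) - h v)`, which in turn is at
least `(z/2) κ₂ ∫ s in v..v + z/2, |s|^(q-1)`. On a quarter of `[v, v + z/2]` one has
`|s| ≥ (|v| + z/2) / 8`, which yields `δ = κ₂ / (32 * 16^(q-1))`. The case `z < 0` is the case
`-z > 0` for the reflection `s ↦ -g (-s)`, whose primitive is `s ↦ G (-s)`.
-/

open intervalIntegral MeasureTheory Set Real

lemma Monotone.sub_mul_le_intervalIntegral {f : ℝ → ℝ} (hf : Monotone f) {a b : ℝ}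
    (hab : a ≤ b) : (b - a) * f a ≤ ∫ x in a..b, f x := by
  simpa using integral_mono_on hab intervalIntegrable_const (hf.intervalIntegrable (μ := volume))
    fun x hx => hf hx.1

lemma mul_rpow_le_integral_abs_rpow {p : ℝ} (hp : 0 ≤ p) (v : ℝ) {w : ℝ} (hw : 0 ≤ w) :
    w / 4 * ((|v| + w) / 8) ^ p ≤ ∫ s in v..v + w, |s| ^ p := by
  have hcont : Continuous fun s : ℝ => |s| ^ p := continuous_abs.rpow_const fun _ => Or.inr hp
  obtain ⟨a, hva, haw, hbound⟩ : ∃ a, v ≤ a ∧ a + w / 4 ≤ v + w ∧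
      ∀ s ∈ Icc a (a + w / 4), (|v| + w) / 8 ≤ |s| := by
    rcases lt_or_ge v (-(w / 2)) with hv | hv
    · refine ⟨v, le_rfl, by linarith, fun s hs => ?_⟩
      rw [abs_of_neg (by linarith), abs_of_neg (by linarith [hs.2])]
      linarith [hs.2]
    · refine ⟨v + 3 * w / 4, by linarith, by linarith, fun s hs => ?_⟩
      rw [abs_of_nonneg (by linarith [hs.1] : 0 ≤ s)]
      cases abs_cases v <;> linarith [hs.1]
  calc w / 4 * ((|v| + w) / 8) ^ p
      = ∫ _ in a..a + w / 4, ((|v| + w) / 8) ^ p := by simp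
    _ ≤ ∫ s in a..a + w / 4, |s| ^ p :=
        integral_mono_on (by linarith) intervalIntegrable_const (hcont.intervalIntegrable _ _)
          fun s hs => rpow_le_rpow (by positivity) (hbound s hs) hp
    _ ≤ ∫ s in v..v + w, |s| ^ p :=
        integral_mono_interval hva (by linarith) haw
          (Filter.Eventually.of_forall fun s => by positivity) (hcont.intervalIntegrable _ _)

lemma rpow_add_rpow_div_le {p a b : ℝ} (hp : 0 ≤ p) (ha : 0 ≤ a) (hb : 0 ≤ b) :
    (a ^ p + b ^ p) / (2 * 16 ^ p) ≤ ((a + b / 2) / 8) ^ p := by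
  have hsum : a ^ p + b ^ p ≤ 2 * (16 ^ p * ((a + b) / 16) ^ p) := by
    rw [← mul_rpow (by norm_num) (by positivity), mul_div_cancel₀ _ (by norm_num)]
    linarith [rpow_le_rpow ha (le_add_of_nonneg_right hb) hp,
      rpow_le_rpow hb (le_add_of_nonneg_left ha) hp]
  rw [div_le_iff₀ (by positivity)]
  calc a ^ p + b ^ p ≤ 2 * (16 ^ p * ((a + b) / 16) ^ p) := hsum
    _ ≤ 2 * (16 ^ p * ((a + b / 2) / 8) ^ p) := by
        gcongr 2 * (_ * ?_)
        exact rpow_le_rpow (by positivity) (by linarith) hp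
    _ = _ := by ring

lemma primitive_sub_sub_mul_eq_integral {g G : ℝ → ℝ} (hg : Continuous g)
    (hG : ∀ s, G s = ∫ τ in (0 : ℝ)..s, g τ) (v z : ℝ) :
    G (v + z) - G v - g v * z = ∫ t in (0 : ℝ)..z, (g (v + t) - g v) := by
  have hshift : IntervalIntegrable (fun t => g (v + t)) volume 0 z :=
    (hg.comp (continuous_const_add v)).intervalIntegrable _ _
  rw [integral_sub hshift intervalIntegrable_const, integral_comp_add_left g v, add_zero, hG, hG,
    integral_interval_sub_left (hg.intervalIntegrable _ _) (hg.intervalIntegrable _ _)]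
  simp [mul_comm]

theorem primitive_bregman_lower_bound_of_nonneg {g G : ℝ → ℝ} {κ₁ κ₂ p : ℝ} (hp : 0 ≤ p)
    (hκ₂ : 0 ≤ κ₂) (hg : Differentiable ℝ g) (hg' : ∀ s, -κ₁ + κ₂ * |s| ^ p ≤ deriv g s)
    (hG : ∀ s, G s = ∫ τ in (0 : ℝ)..s, g τ) (v : ℝ) {z : ℝ} (hz : 0 ≤ z) :
    -κ₁ * z ^ 2 / 2 + κ₂ / (32 * 16 ^ p) * z ^ 2 * (|v| ^ p + z ^ p) ≤
      G (v + z) - G v - g v * z := by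
  set h : ℝ → ℝ := fun s => g s + κ₁ * s
  have hderiv (x : ℝ) : HasDerivAt h (deriv g x + κ₁) x := by
    simpa using (hg x).hasDerivAt.fun_add ((hasDerivAt_id' x).const_mul κ₁)
  have hincr : ∀ a b, a ≤ b → κ₂ * ∫ s in a..b, |s| ^ p ≤ h b - h a := fun a b hab => by
    rw [← intervalIntegral.integral_const_mul]
    exact integral_le_sub_of_hasDeriv_right_of_le hab
      (hg.continuous.add (continuous_const.mul continuous_id)).continuousOn
      (fun x _ => (hderiv x).hasDerivWithinAt)
      ((continuous_const.mul (continuous_abs.rpow_const fun _ => Or.inr hp)).integrableOn_Icc)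
      fun x _ => by linarith [hg' x]
  set f : ℝ → ℝ := fun t => h (v + t) - h v
  have hf : Monotone f := fun a b hab => by
    have hnonneg : 0 ≤ ∫ s in v + a..v + b, |s| ^ p :=
      integral_nonneg (by linarith) fun s _ => by positivity
    have := hincr (v + a) (v + b) (by linarith)
    simp only [f]
    linarith [mul_nonneg hκ₂ hnonneg]
  have hrewrite : G (v + z) - G v - g v * z = (∫ t in (0 : ℝ)..z, f t) - κ₁ * (z ^ 2 / 2) := by
    rw [primitive_sub_sub_mul_eq_integral hg.continuous hG,
      show z ^ 2 / 2 = ∫ t in (0 : ℝ)..z, t by simp, ← intervalIntegral.integral_const_mul,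
      ← intervalIntegral.integral_sub (g := fun t => κ₁ * t) hf.intervalIntegrable
        ((continuous_const.mul continuous_id).intervalIntegrable _ _)]
    congr 1 with t
    simp only [f, h]
    ring
  have hhalf : z / 2 * f (z / 2) ≤ ∫ t in (0 : ℝ)..z, f t := by
    rw [← integral_add_adjacent_intervals (b := z / 2) hf.intervalIntegrable hf.intervalIntegrable]
    have h1 := hf.sub_mul_le_intervalIntegral (a := 0) (b := z / 2) (by linarith)
    have h2 := hf.sub_mul_le_intervalIntegral (a := z / 2) (b := z) (by linarith)
    simp only [f, add_zero, sub_self, mul_zero] at h1 h2 ⊢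
    linarith
  have hquarter : κ₂ * (z / 8 * ((|v| + z / 2) / 8) ^ p) ≤ f (z / 2) := by
    have := mul_rpow_le_integral_abs_rpow hp v (w := z / 2) (by linarith)
    calc κ₂ * (z / 8 * ((|v| + z / 2) / 8) ^ p)
        ≤ κ₂ * ∫ s in v..v + z / 2, |s| ^ p := by
          rw [show z / 8 = z / 2 / 4 by ring]
          gcongr
      _ ≤ f (z / 2) := hincr v (v + z / 2) (by linarith)
  have harith := rpow_add_rpow_div_le hp (abs_nonneg v) hz
  rw [hrewrite]
  calc -κ₁ * z ^ 2 / 2 + κ₂ / (32 * 16 ^ p) * z ^ 2 * (|v| ^ p + z ^ p)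
      = -κ₁ * (z ^ 2 / 2) + κ₂ * z ^ 2 / 16 * ((|v| ^ p + z ^ p) / (2 * 16 ^ p)) := by ring
    _ ≤ -κ₁ * (z ^ 2 / 2) + κ₂ * z ^ 2 / 16 * ((|v| + z / 2) / 8) ^ p := by gcongr
    _ = -κ₁ * (z ^ 2 / 2) + z / 2 * (κ₂ * (z / 8 * ((|v| + z / 2) / 8) ^ p)) := by ring
    _ ≤ (∫ t in (0 : ℝ)..z, f t) - κ₁ * (z ^ 2 / 2) := by
      have := mul_le_mul_of_nonneg_left hquarter (by linarith : 0 ≤ z / 2)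
      linarith

theorem primitive_bregman_lower_bound {g G : ℝ → ℝ} {κ₁ κ₂ p : ℝ} (hp : 0 ≤ p)
    (hκ₂ : 0 ≤ κ₂) (hg : Differentiable ℝ g) (hg' : ∀ s, -κ₁ + κ₂ * |s| ^ p ≤ deriv g s)
    (hG : ∀ s, G s = ∫ τ in (0 : ℝ)..s, g τ) (v z : ℝ) :
    -κ₁ * |z| ^ 2 / 2 + κ₂ / (32 * 16 ^ p) * |z| ^ 2 * (|v| ^ p + |z| ^ p) ≤
      G (v + z) - G v - g v * z := by
  rcases le_or_gt 0 z with hz | hz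
  · rw [abs_of_nonneg hz]
    exact primitive_bregman_lower_bound_of_nonneg hp hκ₂ hg hg' hG v hz
  have hg_refl : Differentiable ℝ fun s => -g (-s) := (hg.comp differentiable_neg).neg
  have hg'_refl (s : ℝ) : -κ₁ + κ₂ * |s| ^ p ≤ deriv (fun s => -g (-s)) s := by
    rw [deriv.fun_neg, deriv_comp_neg, neg_neg, ← abs_neg s]
    exact hg' (-s)
  have hG_refl (s : ℝ) : G (-s) = ∫ τ in (0 : ℝ)..s, -g (-τ) := by
    rw [intervalIntegral.integral_neg, intervalIntegral.integral_comp_neg, neg_zero, hG,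
      intervalIntegral.integral_symm]
  have := primitive_bregman_lower_bound_of_nonneg hp hκ₂ hg_refl hg'_refl hG_refl (-v)
    (neg_nonneg.mpr hz.le)
  rw [abs_of_neg hz]
  simp only [neg_neg, abs_neg, neg_add_rev] at this
  rwa [add_comm z v, neg_mul_neg] at this

theorem primitive_lower_bound_general
    (g : ℝ → ℝ) (κ₁ κ₂ q : ℝ)
    (hg : ContDiff ℝ 1 g)
    (hκ₁ : 0 < κ₁) (hκ₂ : 0 < κ₂) (hq : 3 ≤ q)
    (hg' : ∀ s : ℝ, deriv g s ≥ -κ₁ + κ₂ * |s| ^ (q - 1))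
    (G : ℝ → ℝ) (hG : ∀ s : ℝ, G s = ∫ τ in (0:ℝ)..s, g τ) :
    ∃ δ > 0, ∀ v z : ℝ,
      G (v + z) - G v - g v * z ≥
        -κ₁ * |z| ^ 2 + δ * |z| ^ 2 * (|v| ^ (q - 1) + |z| ^ (q - 1)) := by
  refine ⟨κ₂ / (32 * 16 ^ (q - 1)), by positivity, fun v z => ?_⟩
  have hbound := primitive_bregman_lower_bound (by linarith) hκ₂.le
    (hg.differentiable one_ne_zero) hg' hG v z
  have hκ₁z : 0 ≤ κ₁ * |z| ^ 2 := by positivity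
  linarith

/-- Lower convexity-type bound for the primitive G of g under the dissipativity
    condition g'(s) ≥ -κ₁ + κ₂|s|^{q-1}. -/
theorem primitive_lower_bound
    (g : ℝ → ℝ) (κ₁ κ₂ q : ℝ)
    (hg : ContDiff ℝ 1 g) (hg0 : g 0 = 0)
    (hκ₁ : 0 < κ₁) (hκ₂ : 0 < κ₂) (hq : 3 ≤ q)
    (hg' : ∀ s : ℝ, deriv g s ≥ -κ₁ + κ₂ * |s| ^ (q - 1))
    (G : ℝ → ℝ) (hG : ∀ s : ℝ, G s = ∫ τ in (0:ℝ)..s, g τ) :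
    ∃ δ > 0, ∀ v z : ℝ,
      G (v + z) - G v - g v * z ≥
        -κ₁ * |z| ^ 2 + δ * |z| ^ 2 * (|v| ^ (q - 1) + |z| ^ (q - 1)) :=
  primitive_lower_bound_general g κ₁ κ₂ q hg hκ₁ hκ₂ hq hg' G hG
end

section
/- Let g : ℝ → ℝ be C¹ with g(0) = 0, and suppose g'(s) ≥ −κ₁ + κ₂|s|^{q-1} for all s, where κ₁, κ₂ > 0 and q ≥ 3. Let G(s) = ∫₀ˢ g(τ) dτ. Then there exists δ'_q > 0 depending only on q and κ₂ such that for all v, z ∈ ℝ: G(v+z) − G(v) − g(v)z − (g(v+z) − g(v))z ≤ (κ₁/2)|z|² − δ'_q |z|² (|v|^{q-1} + |z|^{q-1}). -/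
open intervalIntegral Set Real

/-!
Integrating by parts, `G (v + z) - G v - g (v + z) * z = -∫₀^z g' (v + t) t dt`, which is the left
side of the claim. The lower bound on `g'` (with `p = q - 1`) therefore reduces the claim to
`∫₀^z |v + t|^p t dt ≥ z² (|v|^p + |z|^p) / (32 · 24^p)`. For `z > 0` the affine function
`t ↦ v + t` vanishes at most once, so on one of `[z/2, 5z/8]` and `[7z/8, z]` it stays above
`(|v| + z) / 24` in absolute value; the case `z < 0` follows by the reflection `(v, z) ↦ (-v, -z)`.
-/

lemma sub_sub_mul_eq_neg_integral {G g g' : ℝ → ℝ} (hG : ∀ x, HasDerivAt G (g x) x)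
    (hg : ∀ x, HasDerivAt g (g' x) x) (hg' : Continuous g') (v z : ℝ) :
    G (v + z) - G v - g (v + z) * z = -∫ t in (0 : ℝ)..z, g' (v + t) * t := by
  have hderiv : ∀ t ∈ uIcc 0 z,
      HasDerivAt (fun u => g (v + u) * u - G (v + u)) (g' (v + t) * t) t := by
    intro t _
    have h : HasDerivAt (fun u => g (v + u) * u - G (v + u))
        (g' (v + t) * t + g (v + t) * 1 - g (v + t)) t :=
      (((hg (v + t)).comp_const_add v t).mul (hasDerivAt_id' t)).sub
        ((hG (v + t)).comp_const_add v t)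
    convert h using 1; ring
  rw [integral_eq_sub_of_hasDerivAt hderiv
    (((hg'.comp (continuous_const.add continuous_id)).mul continuous_id).intervalIntegrable 0 z)]
  simp only [add_zero, mul_zero]; ring

lemma integral_mul_id_nonneg {φ : ℝ → ℝ} (hφ : ∀ t, 0 ≤ φ t) (z : ℝ) :
    0 ≤ ∫ t in (0 : ℝ)..z, φ t * t := by
  rcases le_total 0 z with hz | hz
  · exact integral_nonneg hz fun t ht => mul_nonneg (hφ t) ht.1
  · rw [integral_symm, ← integral_neg]
    exact integral_nonneg hz fun t ht =>
      neg_nonneg.2 (mul_nonpos_of_nonneg_of_nonpos (hφ t) ht.2)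

lemma integral_mul_id_mono {f h : ℝ → ℝ} (hf : Continuous f) (hh : Continuous h)
    (hfh : ∀ t, f t ≤ h t) (z : ℝ) :
    ∫ t in (0 : ℝ)..z, f t * t ≤ ∫ t in (0 : ℝ)..z, h t * t := by
  have := integral_mul_id_nonneg (φ := fun t => h t - f t) (fun t => sub_nonneg.2 (hfh t)) z
  simp only [sub_mul] at this
  have hint : ∀ φ : ℝ → ℝ, Continuous φ →
      IntervalIntegrable (fun t => φ t * t) MeasureTheory.volume 0 z :=
    fun φ hφ => (hφ.mul continuous_id).intervalIntegrable 0 z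
  rwa [integral_sub (hint h hh) (hint f hf), sub_nonneg] at this

lemma mul_sub_le_integral_of_le_on_Icc {f : ℝ → ℝ} {a b α β m : ℝ}
    (hf : IntervalIntegrable f MeasureTheory.volume a b) (hf₀ : ∀ t ∈ Icc a b, 0 ≤ f t)
    (haα : a ≤ α) (hαβ : α ≤ β) (hβb : β ≤ b) (hm : ∀ t ∈ Icc α β, m ≤ f t) :
    m * (β - α) ≤ ∫ t in a..b, f t := calc
  m * (β - α) = ∫ _ in α..β, m := by rw [integral_const, smul_eq_mul, mul_comm]
  _ ≤ ∫ t in α..β, f t :=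
    integral_mono_on hαβ intervalIntegrable_const (hf.mono_set (by
      rw [uIcc_of_le hαβ, uIcc_of_le (haα.trans (hαβ.trans hβb))]
      exact Icc_subset_Icc haα hβb)) hm
  _ ≤ ∫ t in a..b, f t := integral_mono_interval haα hαβ hβb
      ((MeasureTheory.ae_restrict_iff' measurableSet_Ioc).2
        (MeasureTheory.ae_of_all _ fun t ht => hf₀ t (Ioc_subset_Icc_self ht))) hf

lemma exists_Icc_le_abs_add {z : ℝ} (hz : 0 < z) (v : ℝ) :
    ∃ α, z / 2 ≤ α ∧ α + z / 8 ≤ z ∧ ∀ t ∈ Icc α (α + z / 8), (|v| + z) / 24 ≤ |v + t| := by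
  rcases le_or_gt (-v) (3 * z / 4) with hv | hv
  · refine ⟨7 * z / 8, by linarith, by linarith, fun t ht => ?_⟩
    rw [abs_of_nonneg (by linarith [ht.1] : 0 ≤ v + t)]
    cases abs_cases v <;> linarith [ht.1]
  · refine ⟨z / 2, le_rfl, by linarith, fun t ht => ?_⟩
    rw [abs_of_neg (by linarith [ht.2] : v + t < 0), abs_of_neg (by linarith : v < 0)]
    linarith [ht.2]

section

variable {p : ℝ}

lemma continuous_abs_add_rpow_mul (hp : 0 ≤ p) (v : ℝ) :
    Continuous fun t : ℝ => |v + t| ^ p * t := by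
  fun_prop (disch := exact hp)

lemma integral_abs_add_rpow_mul_ge_of_pos (hp : 0 ≤ p) (v : ℝ) {z : ℝ} (hz : 0 < z) :
    z ^ 2 * (|v| ^ p + z ^ p) / (32 * 24 ^ p) ≤ ∫ t in (0 : ℝ)..z, |v + t| ^ p * t := by
  obtain ⟨α, hα, hαz, hbound⟩ := exists_Icc_le_abs_add hz v
  have hm : ∀ t ∈ Icc α (α + z / 8), ((|v| + z) / 24) ^ p * (z / 2) ≤ |v + t| ^ p * t :=
    fun t ht => mul_le_mul (rpow_le_rpow (by positivity) (hbound t ht) hp) (hα.trans ht.1)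
      (by positivity) (by positivity)
  have hsum : |v| ^ p + z ^ p ≤ 2 * (|v| + z) ^ p := by
    have := rpow_le_rpow (abs_nonneg v) (le_add_of_nonneg_right hz.le) hp
    have := rpow_le_rpow hz.le (le_add_of_nonneg_left (abs_nonneg v)) hp
    linarith
  calc z ^ 2 * (|v| ^ p + z ^ p) / (32 * 24 ^ p)
        ≤ z ^ 2 * (2 * (|v| + z) ^ p) / (32 * 24 ^ p) := by gcongr
    _ = ((|v| + z) / 24) ^ p * (z / 2) * (α + z / 8 - α) := by
        rw [div_rpow (by positivity) (by norm_num)]; field_simp; ring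
    _ ≤ ∫ t in (0 : ℝ)..z, |v + t| ^ p * t :=
        mul_sub_le_integral_of_le_on_Icc
          ((continuous_abs_add_rpow_mul hp v).intervalIntegrable 0 z)
          (fun t ht => by have := ht.1; positivity) (by linarith) (by linarith) hαz hm

lemma integral_neg_abs_add_rpow_mul (v z : ℝ) :
    ∫ t in (0 : ℝ)..-z, |-v + t| ^ p * t = ∫ t in (0 : ℝ)..z, |v + t| ^ p * t := by
  have := integral_comp_neg (a := 0) (b := -z) fun t => |v + t| ^ p * t
  simp only [neg_neg, neg_zero] at this
  calc ∫ t in (0 : ℝ)..-z, |-v + t| ^ p * t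
        = ∫ t in (0 : ℝ)..-z, -(|v + -t| ^ p * -t) := by
          congr 1 with t; rw [← abs_neg (-v + t)]; ring_nf
    _ = ∫ t in (0 : ℝ)..z, |v + t| ^ p * t := by rw [integral_neg, this, integral_symm, neg_neg]

lemma integral_abs_add_rpow_mul_ge (hp : 0 ≤ p) (v z : ℝ) :
    z ^ 2 * (|v| ^ p + |z| ^ p) / (32 * 24 ^ p) ≤ ∫ t in (0 : ℝ)..z, |v + t| ^ p * t := by
  rcases lt_trichotomy z 0 with hz | rfl | hz
  · simpa [abs_of_neg hz, integral_neg_abs_add_rpow_mul] using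
      integral_abs_add_rpow_mul_ge_of_pos hp (-v) (neg_pos.2 hz)
  · simp
  · simpa [abs_of_pos hz] using integral_abs_add_rpow_mul_ge_of_pos hp v hz

end

theorem primitive_upper_bound_general
    (g : ℝ → ℝ) (κ₁ κ₂ q : ℝ)
    (hg : ContDiff ℝ 1 g)
    (hκ₂ : 0 < κ₂) (hq : 3 ≤ q)
    (hg' : ∀ s : ℝ, deriv g s ≥ -κ₁ + κ₂ * |s| ^ (q - 1))
    (G : ℝ → ℝ) (hG : ∀ s : ℝ, G s = ∫ τ in (0:ℝ)..s, g τ) :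
    ∃ δ' > 0, ∀ v z : ℝ,
      G (v + z) - G v - g v * z - (g (v + z) - g v) * z ≤
        (κ₁ / 2) * |z| ^ 2 - δ' * |z| ^ 2 * (|v| ^ (q - 1) + |z| ^ (q - 1)) := by
  have hp : 0 ≤ q - 1 := by linarith
  have hGd : ∀ x, HasDerivAt G (g x) x := fun x => by
    rw [funext hG]; exact (hg.continuous.integral_hasStrictDerivAt 0 x).hasDerivAt
  have hgd : ∀ x, HasDerivAt g (deriv g x) x :=
    fun x => (hg.differentiable one_ne_zero x).hasDerivAt
  have hg'c : Continuous (deriv g) := hg.continuous_deriv le_rfl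
  refine ⟨κ₂ / (32 * 24 ^ (q - 1)), by positivity, fun v z => ?_⟩
  calc G (v + z) - G v - g v * z - (g (v + z) - g v) * z
      = -∫ t in (0:ℝ)..z, deriv g (v + t) * t := by
        rw [← sub_sub_mul_eq_neg_integral hGd hgd hg'c]; ring
    _ ≤ -∫ t in (0:ℝ)..z, (-κ₁ + κ₂ * |v + t| ^ (q - 1)) * t :=
        neg_le_neg <| integral_mul_id_mono (by fun_prop (disch := exact hp)) (by fun_prop)
          (fun t => hg' (v + t)) z
    _ = κ₁ / 2 * |z| ^ 2 - κ₂ * ∫ t in (0:ℝ)..z, |v + t| ^ (q - 1) * t := by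
        simp_rw [add_mul, mul_assoc]
        rw [integral_add (intervalIntegrable_id.const_mul _)
          (((continuous_abs_add_rpow_mul hp v).const_mul κ₂).intervalIntegrable 0 z),
          integral_const_mul, integral_const_mul, integral_id, sq_abs]
        ring
    _ ≤ κ₁ / 2 * |z| ^ 2 -
          κ₂ * (z ^ 2 * (|v| ^ (q - 1) + |z| ^ (q - 1)) / (32 * 24 ^ (q - 1))) := by
        gcongr; exact integral_abs_add_rpow_mul_ge hp v z
    _ = _ := by rw [sq_abs]; ring

/-- Upper bound (4.39)-type estimate for the primitive G of g under the
    dissipativity condition g'(s) ≥ -κ₁ + κ₂|s|^{q-1}. -/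
theorem primitive_upper_bound
    (g : ℝ → ℝ) (κ₁ κ₂ q : ℝ)
    (hg : ContDiff ℝ 1 g) (hg0 : g 0 = 0)
    (hκ₁ : 0 < κ₁) (hκ₂ : 0 < κ₂) (hq : 3 ≤ q)
    (hg' : ∀ s : ℝ, deriv g s ≥ -κ₁ + κ₂ * |s| ^ (q - 1))
    (G : ℝ → ℝ) (hG : ∀ s : ℝ, G s = ∫ τ in (0:ℝ)..s, g τ) :
    ∃ δ' > 0, ∀ v z : ℝ,
      G (v + z) - G v - g v * z - (g (v + z) - g v) * z ≤
        (κ₁ / 2) * |z| ^ 2 - δ' * |z| ^ 2 * (|v| ^ (q - 1) + |z| ^ (q - 1)) :=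
  primitive_upper_bound_general g κ₁ κ₂ q hg hκ₂ hq hg' G hG
end

section
/- Let E be a Banach space and n : E → [0,∞) a compact seminorm (every bounded sequence has a subsequence that is Cauchy in n). Let Z be a Banach space, C : B → Z a Lipschitz map on a bounded closed set B ⊂ E with constant ν, and n_Z a compact seminorm on Z. If a map S : B → B satisfies ‖Sx − Sy‖_E ≤ η‖x − y‖_E + n_Z(Cx − Cy) for all x,y ∈ B with 0 ≤ η < 1/2, then for every bounded sequence {xₘ} ⊂ B, {S xₘ} has a subsequence {S x_{m_k}} with lim sup_{k,l→∞} ‖S x_{m_k} − S x_{m_l}‖_E ≤ 2η · diam_E(B). -/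
open Filter

/-- Squeezing-type consequence of the quasi-stability estimate: if
    ‖Sx − Sy‖ ≤ η‖x−y‖ + n_Z(Cx − Cy) with C Lipschitz and n_Z a compact
    seminorm, then images of bounded sequences admit subsequences whose mutual
    distances are asymptotically at most 2η·diam(B). -/
theorem quasi_stability_squeezing
    {E Z : Type*} [NormedAddCommGroup E] [NormedSpace ℝ E] [CompleteSpace E]
    [NormedAddCommGroup Z] [NormedSpace ℝ Z] [CompleteSpace Z]
    (B : Set E) (hBbdd : Bornology.IsBounded B) (hBclosed : IsClosed B)
    (S : E → E) (hSB : Set.MapsTo S B B)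
    (C : E → Z) (nZ : Z → ℝ) (η ν : ℝ)
    (hη0 : 0 ≤ η) (hη : η < 1 / 2) (hν : 0 < ν)
    (hn0 : ∀ z, 0 ≤ nZ z)
    (hnadd : ∀ z w, nZ (z + w) ≤ nZ z + nZ w)
    (hnneg : ∀ z, nZ (-z) = nZ z)
    (hncompact : ∀ z : ℕ → Z, Bornology.IsBounded (Set.range z) →
      ∃ ψ : ℕ → ℕ, StrictMono ψ ∧
        ∀ ε > (0:ℝ), ∃ N, ∀ k ≥ N, ∀ l ≥ N, nZ (z (ψ k) - z (ψ l)) < ε)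
    (hC : ∀ x ∈ B, ∀ y ∈ B, ‖C x - C y‖ ≤ ν * ‖x - y‖)
    (hS : ∀ x ∈ B, ∀ y ∈ B, ‖S x - S y‖ ≤ η * ‖x - y‖ + nZ (C x - C y)) :
    ∀ x : ℕ → E, (∀ m, x m ∈ B) →
      ∃ ψ : ℕ → ℕ, StrictMono ψ ∧
        ∀ ε > (0:ℝ), ∃ N, ∀ k ≥ N, ∀ l ≥ N,
          ‖S (x (ψ k)) - S (x (ψ l))‖ ≤ 2 * η * Metric.diam B + ε := by
  intro x hx
  have hzbdd : Bornology.IsBounded (Set.range fun m => C (x m)) := by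
    rw [Metric.isBounded_range_iff]
    refine ⟨ν * Metric.diam B, fun m n => ?_⟩
    calc dist (C (x m)) (C (x n)) = ‖C (x m) - C (x n)‖ := dist_eq_norm _ _
      _ ≤ ν * ‖x m - x n‖ := hC _ (hx m) _ (hx n)
      _ ≤ ν * Metric.diam B := by
          apply mul_le_mul_of_nonneg_left _ hν.le
          rw [← dist_eq_norm]
          exact Metric.dist_le_diam_of_mem hBbdd (hx m) (hx n)
  obtain ⟨ψ, hψ, hcau⟩ := hncompact (fun m => C (x m)) hzbdd
  refine ⟨ψ, hψ, fun ε hε => ?_⟩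
  obtain ⟨N, hN⟩ := hcau ε hε
  refine ⟨N, fun k hk l hl => ?_⟩
  have h1 := hS _ (hx (ψ k)) _ (hx (ψ l))
  have h2 := hN k hk l hl
  have h3 : ‖x (ψ k) - x (ψ l)‖ ≤ Metric.diam B := by
    rw [← dist_eq_norm]
    exact Metric.dist_le_diam_of_mem hBbdd (hx (ψ k)) (hx (ψ l))
  have hdiam : 0 ≤ Metric.diam B := Metric.diam_nonneg
  nlinarith
end

section
/- Let y : [0,∞) → [0,∞) be absolutely continuous and β : [0,∞) → [0,∞) locally integrable with ∫_t^{t+1} β(r) dr ≤ Cε for all t ≥ 0, where Cε < α/16 for some α > 0. Suppose y'(t) + (α/4)y(t) ≤ 2β(t)y(t) + f(t) with f ≥ 0 locally integrable. Then y(t) ≤ e^{−(α/8)t + α/8} y(0) + e^{α/8} ∫₀ᵗ e^{−(α/8)(t−s)} f(s) ds for all t ≥ 0. -/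
/-!
Put `k = 2β - α/4`. The differential inequality `y' ≤ k y + f` gives the sharp Gronwall bound
`y t ≤ exp (∫₀ᵗ k) y 0 + ∫₀ᵗ exp (∫ₛᵗ k) f s`. Since `β` is merely integrable, this is proved with
absolutely continuous functions: after the factor `exp (c t)` has made the coefficient `k + c`
nonnegative, `u ≤ R := u 0 + ∫ ((k + c) u + g)` turns into `(exp (-A) R)' ≤ exp (-A) g` almost
everywhere, with `A` a primitive of `k + c`, and the fundamental theorem of calculus for absolutely
continuous functions integrates this. Covering `[s, t]` by `⌈t - s⌉` unit intervals gives
`∫ₛᵗ 2β ≤ 2Cε (t - s + 1) ≤ α/8 (t - s + 1)`, i.e. `∫ₛᵗ k ≤ -α/8 (t - s) + α/8`.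
-/

open MeasureTheory Set Filter

theorem AbsolutelyContinuousOnInterval.comp_lipschitzOnWith {X : Type*} [PseudoMetricSpace X]
    {f : ℝ → ℝ} {g : ℝ → X} {K : NNReal} {s : Set ℝ} {a b : ℝ}
    (hg : LipschitzOnWith K g s) (hf : AbsolutelyContinuousOnInterval f a b)
    (hfs : MapsTo f (uIcc a b) s) : AbsolutelyContinuousOnInterval (g ∘ f) a b := by
  unfold AbsolutelyContinuousOnInterval at hf ⊢
  apply squeeze_zero' ?_ ?_ (by simpa using hf.const_mul (K : ℝ))
  · exact Eventually.of_forall fun _ ↦ Finset.sum_nonneg fun _ _ ↦ dist_nonneg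
  rw [eventually_inf_principal]
  filter_upwards with E hE
  rw [Finset.mul_sum]
  gcongr with i hi
  exact hg.dist_le_mul _ (hfs (hE.1 i hi).1) _ (hfs (hE.1 i hi).2)

theorem ContDiff.comp_absolutelyContinuousOnInterval {g f : ℝ → ℝ} {a b : ℝ}
    (hg : ContDiff ℝ 1 g) (hf : AbsolutelyContinuousOnInterval f a b) :
    AbsolutelyContinuousOnInterval (g ∘ f) a b := by
  obtain ⟨C, hC⟩ := hf.exists_bound
  obtain ⟨K, hK⟩ := hg.contDiffOn.exists_lipschitzOnWith (s := Icc (-C) C) one_ne_zero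
    (convex_Icc _ _) isCompact_Icc
  exact hf.comp_lipschitzOnWith hK fun x hx ↦ abs_le.1 (hC x hx)

theorem le_exp_integral_mul_add_integral_of_le_add_integral {u k g : ℝ → ℝ} {a b : ℝ}
    (hab : a ≤ b) (hu : ContinuousOn u (Icc a b)) (hk : IntervalIntegrable k volume a b)
    (hk0 : ∀ x ∈ Icc a b, 0 ≤ k x) (hg : IntervalIntegrable g volume a b)
    (h : ∀ x ∈ Icc a b, u x ≤ u a + ∫ r in a..x, (k r * u r + g r)) :
    u b ≤ Real.exp (∫ r in a..b, k r) * u a + ∫ s in a..b, Real.exp (∫ r in s..b, k r) * g s := by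
  rw [← uIcc_of_le hab] at hu hk0 h
  set A : ℝ → ℝ := fun x ↦ ∫ r in a..x, k r
  set R : ℝ → ℝ := fun x ↦ u a + ∫ r in a..x, (k r * u r + g r)
  have hφ : IntervalIntegrable (fun r ↦ k r * u r + g r) volume a b :=
    (hk.mul_continuousOn hu).add hg
  have hA : AbsolutelyContinuousOnInterval A a b :=
    hk.absolutelyContinuousOnInterval_intervalIntegral left_mem_uIcc
  have hR : AbsolutelyContinuousOnInterval R a b :=
    (LipschitzWith.const (u a)).lipschitzOnWith.absolutelyContinuousOnInterval.add
      (hφ.absolutelyContinuousOnInterval_intervalIntegral left_mem_uIcc)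
  have hZ : AbsolutelyContinuousOnInterval (fun x ↦ Real.exp (-A x) * R x) a b :=
    (Real.contDiff_exp.comp_absolutelyContinuousOnInterval hA.neg).mul hR
  -- `exp (-A) * R` has derivative `exp (-A) * (g + k * (u - R)) ≤ exp (-A) * g` almost everywhere
  have hderiv : ∀ᵐ x ∂volume.restrict (Icc a b),
      deriv (fun x ↦ Real.exp (-A x) * R x) x ≤ Real.exp (-A x) * g x := by
    rw [← uIcc_of_le hab, ae_restrict_iff' measurableSet_uIcc]
    filter_upwards [hk.ae_hasDerivAt_integral, hφ.ae_hasDerivAt_integral] with x hAx hRx hx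
    have hAx' : HasDerivAt A (k x) x := hAx hx a left_mem_uIcc
    have hRx' : HasDerivAt R (k x * u x + g x) x := (hRx hx a left_mem_uIcc).const_add (u a)
    rw [(hAx'.fun_neg.exp.fun_mul hRx').deriv]
    have : k x * (u x - R x) ≤ 0 := mul_nonpos_of_nonneg_of_nonpos (hk0 x hx) (by linarith [h x hx])
    nlinarith [Real.exp_pos (-A x)]
  have hmono : Real.exp (-A b) * R b - Real.exp (-A a) * R a
      ≤ ∫ x in a..b, Real.exp (-A x) * g x := by
    rw [← hZ.integral_deriv_eq_sub]
    exact intervalIntegral.integral_mono_ae_restrict hab hZ.intervalIntegrable_deriv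
      (hg.continuousOn_mul (Real.continuous_exp.comp_continuousOn hA.continuousOn.neg)) hderiv
  have hshift : ∫ s in a..b, Real.exp (∫ r in s..b, k r) * g s
      = Real.exp (A b) * ∫ s in a..b, Real.exp (-A s) * g s := by
    rw [← intervalIntegral.integral_const_mul]
    refine intervalIntegral.integral_congr fun s hs ↦ ?_
    have hks : IntervalIntegrable k volume a s := hk.mono_set (uIcc_subset_uIcc_left hs)
    simp only [A, ← intervalIntegral.integral_interval_sub_left hk hks, sub_eq_add_neg,
      Real.exp_add, mul_assoc]
  have hA0 : A a = 0 := intervalIntegral.integral_same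
  have hRb : R b = Real.exp (A b) * (Real.exp (-A b) * R b) := by
    rw [← mul_assoc, ← Real.exp_add, add_neg_cancel, Real.exp_zero, one_mul]
  calc u b ≤ R b := h b right_mem_uIcc
    _ ≤ Real.exp (A b) * (u a + ∫ s in a..b, Real.exp (-A s) * g s) := by
      rw [hRb]
      gcongr
      have hRa : R a = u a := by simp [R]
      rw [hA0, hRa, neg_zero, Real.exp_zero, one_mul] at hmono
      linarith
    _ = _ := by rw [hshift, mul_add]

theorem le_exp_integral_mul_add_integral_of_hasDerivAt {y y' k g : ℝ → ℝ} {a b c : ℝ}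
    (hab : a ≤ b) (hy : ContinuousOn y (Icc a b)) (hy' : ∀ x ∈ Ioo a b, HasDerivAt y (y' x) x)
    (hk : IntervalIntegrable k volume a b) (hkc : ∀ x ∈ Icc a b, -c ≤ k x)
    (hg : IntervalIntegrable g volume a b) (hle : ∀ x ∈ Ioo a b, y' x ≤ k x * y x + g x) :
    y b ≤ Real.exp (∫ r in a..b, k r) * y a + ∫ s in a..b, Real.exp (∫ r in s..b, k r) * g s := by
  set u : ℝ → ℝ := fun x ↦ Real.exp (c * x) * y x
  have hexp : Continuous fun x ↦ Real.exp (c * x) := by fun_prop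
  have hu : ContinuousOn u (Icc a b) := hexp.continuousOn.mul hy
  have hkc' : IntervalIntegrable (fun x ↦ k x + c) volume a b := hk.add intervalIntegrable_const
  have hg' : IntervalIntegrable (fun x ↦ Real.exp (c * x) * g x) volume a b :=
    hg.continuousOn_mul hexp.continuousOn
  have hφ := (hkc'.mul_continuousOn (uIcc_of_le hab ▸ hu)).add hg'
  have hint : ∀ x ∈ Icc a b,
      u x ≤ u a + ∫ r in a..x, ((k r + c) * u r + Real.exp (c * r) * g r) := by
    intro x hx
    have := intervalIntegral.sub_le_integral_of_hasDeriv_right_of_le hx.1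
      (hu.mono (Icc_subset_Icc_right hx.2))
      (fun t ht ↦ (((hasDerivAt_id t).const_mul c).exp.mul
        (hy' t ⟨ht.1, ht.2.trans_le hx.2⟩)).hasDerivWithinAt)
      ((intervalIntegrable_iff_integrableOn_Icc_of_le hab).1 hφ |>.mono_set
        (Icc_subset_Icc_right hx.2))
      (fun t ht ↦ by
        have := hle t ⟨ht.1, ht.2.trans_le hx.2⟩
        simp only [u, id, mul_one]
        nlinarith [Real.exp_pos (c * t)])
    linarith
  have key := le_exp_integral_mul_add_integral_of_le_add_integral hab hu hkc'
    (fun x hx ↦ by linarith [hkc x hx]) hg' hint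
  have hshift : ∀ s ∈ uIcc a b, ∀ z : ℝ, Real.exp (∫ r in s..b, (k r + c)) * (Real.exp (c * s) * z)
      = Real.exp (c * b) * (Real.exp (∫ r in s..b, k r) * z) := by
    intro s hs z
    rw [intervalIntegral.integral_add (hk.mono_set (uIcc_subset_uIcc hs right_mem_uIcc))
      intervalIntegrable_const, intervalIntegral.integral_const, smul_eq_mul,
      show (∫ r in s..b, k r) + (b - s) * c = c * b + (∫ r in s..b, k r) - c * s by ring,
      Real.exp_sub, Real.exp_add]
    field_simp
  rw [hshift a left_mem_uIcc, intervalIntegral.integral_congr fun s hs ↦ hshift s hs (g s),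
    intervalIntegral.integral_const_mul, ← mul_add] at key
  exact le_of_mul_le_mul_left key (Real.exp_pos _)

section UnitIntervals

variable {β : ℝ → ℝ} {s : ℝ}

theorem intervalIntegrable_add_nat_of_unit_intervals
    (hβint : ∀ r ≥ s, IntervalIntegrable β volume r (r + 1)) :
    ∀ n : ℕ, IntervalIntegrable β volume s (s + n)
  | 0 => by simp
  | n + 1 => by
    push_cast
    rw [← add_assoc]
    exact (intervalIntegrable_add_nat_of_unit_intervals hβint n).trans
      (hβint _ (le_add_of_nonneg_right n.cast_nonneg))

theorem intervalIntegrable_of_unit_intervals {t : ℝ} (hst : s ≤ t)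
    (hβint : ∀ r ≥ s, IntervalIntegrable β volume r (r + 1)) :
    IntervalIntegrable β volume s t :=
  (intervalIntegrable_add_nat_of_unit_intervals hβint ⌈t - s⌉₊).mono_set <|
    uIcc_subset_uIcc_left <| by
      rw [uIcc_of_le (le_add_of_nonneg_right (Nat.cast_nonneg _))]
      exact ⟨hst, by linarith [Nat.le_ceil (t - s)]⟩

theorem integral_add_nat_le_of_unit_intervals {C : ℝ}
    (hβint : ∀ r ≥ s, IntervalIntegrable β volume r (r + 1))
    (hβ : ∀ r ≥ s, ∫ x in r..r + 1, β x ≤ C) :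
    ∀ n : ℕ, ∫ x in s..s + n, β x ≤ n * C
  | 0 => by simp
  | n + 1 => by
    have hr : s + n ≥ s := le_add_of_nonneg_right n.cast_nonneg
    push_cast
    rw [← add_assoc, ← intervalIntegral.integral_add_adjacent_intervals
      (intervalIntegrable_add_nat_of_unit_intervals hβint n) (hβint _ hr)]
    linarith [integral_add_nat_le_of_unit_intervals hβint hβ n, hβ _ hr]

theorem integral_le_of_unit_intervals {C t : ℝ} (hst : s ≤ t) (hβ0 : ∀ x ≥ s, 0 ≤ β x)
    (hβint : ∀ r ≥ s, IntervalIntegrable β volume r (r + 1))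
    (hβ : ∀ r ≥ s, ∫ x in r..r + 1, β x ≤ C) :
    ∫ x in s..t, β x ≤ (t - s + 1) * C := by
  have hC : 0 ≤ C := (intervalIntegral.integral_nonneg (by linarith) fun x hx ↦ hβ0 x hx.1).trans
    (hβ s le_rfl)
  set n := ⌈t - s⌉₊
  have hn : t ≤ s + n := by linarith [Nat.le_ceil (t - s)]
  calc ∫ x in s..t, β x ≤ ∫ x in s..s + n, β x :=
        intervalIntegral.integral_mono_interval le_rfl hst hn
          ((ae_restrict_iff' measurableSet_Ioc).2 (.of_forall fun x hx ↦ hβ0 x hx.1.le))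
          (intervalIntegrable_add_nat_of_unit_intervals hβint n)
    _ ≤ n * C := integral_add_nat_le_of_unit_intervals hβint hβ n
    _ ≤ (t - s + 1) * C := by gcongr; linarith [Nat.ceil_lt_add_one (sub_nonneg.2 hst)]

theorem integral_two_mul_sub_le_of_unit_intervals {C α t : ℝ} (hst : s ≤ t)
    (hβ0 : ∀ x ≥ s, 0 ≤ β x) (hβint : ∀ r ≥ s, IntervalIntegrable β volume r (r + 1))
    (hβ : ∀ r ≥ s, ∫ x in r..r + 1, β x ≤ C) (hC : C ≤ α / 16) :
    ∫ x in s..t, (2 * β x - α / 4) ≤ -(α / 8) * (t - s) + α / 8 := by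
  have := integral_le_of_unit_intervals hst hβ0 hβint hβ
  rw [intervalIntegral.integral_sub
      ((intervalIntegrable_of_unit_intervals hst hβint).const_mul 2) intervalIntegrable_const,
    intervalIntegral.integral_const_mul, intervalIntegral.integral_const, smul_eq_mul]
  nlinarith

end UnitIntervals

theorem integral_exp_mul_le_of_le {K f : ℝ → ℝ} {κ t : ℝ} (ht : 0 ≤ t) (hf0 : ∀ s, 0 ≤ f s)
    (hf : IntegrableOn f (Icc 0 t)) (hK : ∀ s ∈ Icc 0 t, K s ≤ -κ * (t - s) + κ) :
    ∫ s in 0..t, Real.exp (K s) * f s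
      ≤ Real.exp κ * ∫ s in Icc 0 t, Real.exp (-κ * (t - s)) * f s := by
  rw [intervalIntegral.integral_of_le ht, integral_Icc_eq_integral_Ioc, ← integral_const_mul]
  refine integral_mono_of_nonneg (.of_forall fun s ↦ mul_nonneg (Real.exp_pos _).le (hf0 s))
    (IntegrableOn.mono_set (Integrable.const_mul (hf.continuousOn_mul
      (g := fun s ↦ Real.exp (-κ * (t - s))) (by fun_prop) isCompact_Icc) _)
      Ioc_subset_Icc_self) ((ae_restrict_iff' measurableSet_Ioc).2 (.of_forall fun s hs ↦ ?_))
  dsimp only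
  rw [← mul_assoc, ← Real.exp_add]
  gcongr
  · exact hf0 s
  · linarith [hK s (Ioc_subset_Icc_self hs)]

theorem gronwall_small_perturbation_general
    (y y' β f : ℝ → ℝ) (α Cε : ℝ)
    (hy : ∀ t ∈ Set.Ici (0:ℝ), HasDerivAt y (y' t) t)
    (hy0 : ∀ t ∈ Set.Ici (0:ℝ), 0 ≤ y t)
    (hβ0 : ∀ t : ℝ, 0 ≤ β t)
    (hβint : ∀ t : ℝ, IntegrableOn β (Set.Icc t (t + 1)))
    (hβ : ∀ t ≥ (0:ℝ), ∫ r in Set.Icc t (t + 1), β r ≤ Cε)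
    (hCε : Cε < α / 16)
    (hf0 : ∀ t : ℝ, 0 ≤ f t)
    (hfint : ∀ t : ℝ, IntegrableOn f (Set.Icc 0 t))
    (hineq : ∀ t ≥ (0:ℝ), y' t + (α / 4) * y t ≤ 2 * β t * y t + f t) :
    ∀ t ≥ (0:ℝ),
      y t ≤ Real.exp (-(α / 8) * t + α / 8) * y 0 +
        Real.exp (α / 8) * ∫ s in Set.Icc (0:ℝ) t,
          Real.exp (-(α / 8) * (t - s)) * f s := by
  intro t ht
  have hβint' : ∀ r ≥ (0 : ℝ), IntervalIntegrable β volume r (r + 1) := fun r _ ↦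
    (intervalIntegrable_iff_integrableOn_Icc_of_le (by linarith)).2 (hβint r)
  have hk : ∀ s ∈ Icc 0 t, ∫ r in s..t, (2 * β r - α / 4) ≤ -(α / 8) * (t - s) + α / 8 :=
    fun s hs ↦ integral_two_mul_sub_le_of_unit_intervals hs.2 (fun x _ ↦ hβ0 x)
      (fun r hr ↦ hβint' r (hs.1.trans hr))
      (fun r hr ↦ by
        rw [intervalIntegral.integral_of_le (by linarith), ← integral_Icc_eq_integral_Ioc]
        exact hβ r (hs.1.trans hr))
      hCε.le
  have gron := le_exp_integral_mul_add_integral_of_hasDerivAt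
    (k := fun x ↦ 2 * β x - α / 4) (c := α / 4) ht
    (fun x hx ↦ (hy x hx.1).continuousAt.continuousWithinAt) (fun x hx ↦ hy x hx.1.le)
    (((intervalIntegrable_of_unit_intervals ht hβint').const_mul 2).sub intervalIntegrable_const)
    (fun x _ ↦ by linarith [hβ0 x])
    ((intervalIntegrable_iff_integrableOn_Icc_of_le ht).2 (hfint t))
    (fun x hx ↦ by linarith [hineq x hx.1.le])
  have hforcing := integral_exp_mul_le_of_le ht hf0 (hfint t) hk
  calc y t ≤ _ := gron
    _ ≤ _ := by
      gcongr
      · exact hy0 0 self_mem_Ici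
      · linarith [hk 0 (left_mem_Icc.2 ht)]

/-- Gronwall-type lemma with a perturbation β having small integral over unit
    intervals (passage from (5.14) to (5.15) in the dissipativity proof of
    Theorem 5.2). -/
theorem gronwall_small_perturbation
    (y y' β f : ℝ → ℝ) (α Cε : ℝ) (hα : 0 < α)
    (hy : ∀ t ∈ Set.Ici (0:ℝ), HasDerivAt y (y' t) t)
    (hy0 : ∀ t ∈ Set.Ici (0:ℝ), 0 ≤ y t)
    (hβ0 : ∀ t : ℝ, 0 ≤ β t)
    (hβint : ∀ t : ℝ, IntegrableOn β (Set.Icc t (t + 1)))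
    (hβ : ∀ t ≥ (0:ℝ), ∫ r in Set.Icc t (t + 1), β r ≤ Cε)
    (hCε : Cε < α / 16)
    (hf0 : ∀ t : ℝ, 0 ≤ f t)
    (hfint : ∀ t : ℝ, IntegrableOn f (Set.Icc 0 t))
    (hineq : ∀ t ≥ (0:ℝ), y' t + (α / 4) * y t ≤ 2 * β t * y t + f t) :
    ∀ t ≥ (0:ℝ),
      y t ≤ Real.exp (-(α / 8) * t + α / 8) * y 0 +
        Real.exp (α / 8) * ∫ s in Set.Icc (0:ℝ) t,
          Real.exp (-(α / 8) * (t - s)) * f s :=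
  gronwall_small_perturbation_general y y' β f α Cε hy hy0 hβ0 hβint hβ hCε hf0 hfint hineq
end
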